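/- arXiv:0809.4399 — 3 statements merged into one kernel-verified Lean document; each statement's English description precedes it below -/
import Mathlib

section
/- Let X=(V,E) be a finite simple connected tree with n ≥ 3 vertices (i.e. X is connected and |E| = n − 1). Then the edge-flipping group W_E(X) is isomorphic to the symmetric group S_n of degree n. -/
open scoped Classical

noncomputable section

variable {V : Type*}

/-- The indicator (over `F₂`) of whether a `Sym2` element has exactly one endpoint in `U`. -/
def edgeCutFun (U : Set V) : Sym2 V → ZMod 2 :=
  Sym2.lift ⟨fun x y => (if x ∈ U then 1 else 0) + (if y ∈ U then 1 else 0),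
    fun _ _ => add_comm _ _⟩

/-- The edge cut `E(U)`, as an element of the edge space `𝓔 = (X.edgeSet → ZMod 2)`. -/
def edgeCut (X : SimpleGraph V) (U : Set V) : X.edgeSet → ZMod 2 :=
  fun e => edgeCutFun U e.1

/-- The bond space `𝓑`, the span of the vertex edge cuts. -/
def bondSpace (X : SimpleGraph V) : Submodule (ZMod 2) (X.edgeSet → ZMod 2) :=
  Submodule.span (ZMod 2) (Set.range fun v => edgeCut X {v})

lemma edgeCut_single_mem_bondSpace (X : SimpleGraph V) (v : V) :
    edgeCut X {v} ∈ bondSpace X :=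
  Submodule.subset_span ⟨v, rfl⟩

/-- generic flip: `G ↦ G + G i • C`, a linear endomorphism of `ι → ZMod 2`. -/
def flipLin {ι : Type*} (i : ι) (C : ι → ZMod 2) :
    (ι → ZMod 2) →ₗ[ZMod 2] (ι → ZMod 2) where
  toFun G := G + G i • C
  map_add' G H := by
    funext f
    simp only [Pi.add_apply, Pi.smul_apply, smul_eq_mul]
    ring
  map_smul' c G := by
    funext f
    simp only [Pi.add_apply, Pi.smul_apply, smul_eq_mul, RingHom.id_apply]
    ring

lemma flipLin_flipLin {ι : Type*} (i : ι) (C : ι → ZMod 2) (hC : C i = 0)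
    (G : ι → ZMod 2) : flipLin i C (flipLin i C G) = G := by
  funext f
  have h2 : (2 : ZMod 2) = 0 := by decide
  simp only [flipLin, LinearMap.coe_mk, AddHom.coe_mk, Pi.add_apply, Pi.smul_apply,
    smul_eq_mul, hC, mul_zero, add_zero]
  ring_nf
  rw [h2, mul_zero, add_zero]

/-- generic flip as a unit of the endomorphism ring (element of `GL`). -/
def flipGL {ι : Type*} (i : ι) (C : ι → ZMod 2) (hC : C i = 0) :
    ((ι → ZMod 2) →ₗ[ZMod 2] (ι → ZMod 2))ˣ where
  val := flipLin i C
  inv := flipLin i C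
  val_inv := LinearMap.ext fun G => flipLin_flipLin i C hC G
  inv_val := LinearMap.ext fun G => flipLin_flipLin i C hC G

lemma edgeCutFun_self (e : Sym2 V) : edgeCutFun {v | v ∈ e} e = 0 := by
  induction e using Sym2.ind with
  | _ x y =>
    simp [edgeCutFun, Sym2.mem_iff]
    decide

/-- The move `ρ_ε` of the edge-flipping puzzle, as an element of `GL(𝓔)`. -/
def edgeFlip (X : SimpleGraph V) (ε : X.edgeSet) :
    ((X.edgeSet → ZMod 2) →ₗ[ZMod 2] (X.edgeSet → ZMod 2))ˣ :=
  flipGL ε (edgeCut X {v | v ∈ (ε : Sym2 V)}) (edgeCutFun_self ε.1)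

/-- The edge-flipping group `W_E(X)`. -/
def edgeFlippingGroup (X : SimpleGraph V) :
    Subgroup ((X.edgeSet → ZMod 2) →ₗ[ZMod 2] (X.edgeSet → ZMod 2))ˣ :=
  Subgroup.closure (Set.range (edgeFlip X))

/-- Indicator of the neighborhood `N(v)`, in the vertex space `𝒱 = (V → ZMod 2)`. -/
def nbrFun (X : SimpleGraph V) (v : V) : V → ZMod 2 :=
  fun w => if X.Adj v w then 1 else 0

/-- The move `s_v` of the vertex-flipping puzzle, as an element of `GL(𝒱)`. -/
def vertexFlip (X : SimpleGraph V) (v : V) :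
    ((V → ZMod 2) →ₗ[ZMod 2] (V → ZMod 2))ˣ :=
  flipGL v (nbrFun X v) (by simp [nbrFun])

/-- The vertex-flipping group `W_V(X)`. -/
def vertexFlippingGroup (X : SimpleGraph V) :
    Subgroup ((V → ZMod 2) →ₗ[ZMod 2] (V → ZMod 2))ˣ :=
  Subgroup.closure (Set.range (vertexFlip X))

end

/-!
Let `δ : 𝒱 → 𝓔`, `f ↦ (xy ↦ f x + f y)`, be the cut map from the vertex space `𝒱 = F₂^V`. For a
connected graph its kernel is the constants, so for a tree a dimension count shows that `δ` is
onto and `𝓔 ≅ 𝒱 ⧸ ⟨1⟩`. The permutation action of `Sym(V)` on `𝒱` fixes `1`, hence descends to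
`𝓔`, and there the transposition of the endpoints of an edge `ε` acts as `ρ_ε`. Transpositions
along edges of a connected graph generate `Sym(V)`, so the image of `Sym(V)` is `W_E(X)`; the
action is faithful because for `n ≥ 3` no nontrivial permutation moves every `f ∈ 𝒱` by a
constant.
-/

namespace SimpleGraph

variable {V : Type*} {G : SimpleGraph V}

theorem Preconnected.rel_of_forall_adj (hG : G.Preconnected) {r : V → V → Prop}
    (hr : Equivalence r) (hadj : ∀ x y, G.Adj x y → r x y) (x y : V) : r x y :=
  Relation.reflTransGen_le_of_equivalence_of_le hr hadj x y
    (reachable_eq_reflTransGen ▸ hG x y)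

theorem Preconnected.closure_swap_adj_eq_top [Finite V] (hG : G.Preconnected) :
    Subgroup.closure {σ : Equiv.Perm V | ∃ x y, G.Adj x y ∧ Equiv.swap x y = σ} = ⊤ := by
  set S := {σ : Equiv.Perm V | ∃ x y, G.Adj x y ∧ Equiv.swap x y = σ}
  have hswaps : ∀ σ ∈ S, σ.IsSwap := by
    rintro _ ⟨x, y, hxy, rfl⟩
    exact ⟨x, y, hxy.ne, rfl⟩
  have horbit : ∀ x y : V, x ∈ MulAction.orbit (Subgroup.closure S) y :=
    hG.rel_of_forall_adj (MulAction.orbitRel _ V).iseqv fun x y hxy =>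
      ⟨⟨Equiv.swap x y, Subgroup.subset_closure ⟨x, y, hxy, rfl⟩⟩, Equiv.swap_apply_right x y⟩
  have : MulAction.IsPretransitive (Subgroup.closure S) V := ⟨fun x y => horbit y x⟩
  exact closure_of_isSwap_of_isPretransitive hswaps

end SimpleGraph

section PermRep

variable (R V : Type*) [Semiring R]

def permRep : Representation R (Equiv.Perm V) (V → R) where
  toFun σ := LinearMap.funLeft R R σ.symm
  map_one' := rfl
  map_mul' _ _ := rfl

variable {R V}

theorem permRep_apply (σ : Equiv.Perm V) (f : V → R) (v : V) :
    permRep R V σ f v = f (σ.symm v) := rfl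

theorem permRep_single [DecidableEq V] (σ : Equiv.Perm V) (v : V) (c : R) :
    permRep R V σ (Pi.single v c) = Pi.single (σ v) c := by
  ext w
  simp only [permRep_apply, Pi.single_apply, Equiv.symm_apply_eq]

theorem eq_one_of_forall_permRep_sub_mem_span_one {R : Type*} [Ring R] [Nontrivial R] [Fintype V]
    (hn : 3 ≤ Fintype.card V) {σ : Equiv.Perm V}
    (h : ∀ f : V → R, permRep R V σ f - f ∈ Submodule.span R {1}) : σ = 1 := by
  refine Equiv.ext fun v => by_contra fun hv => ?_
  rw [Equiv.Perm.one_apply] at hv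
  obtain ⟨w, -, hw⟩ : ∃ w ∈ Finset.univ, w ∉ ({v, σ v} : Finset V) :=
    Finset.exists_mem_notMem_of_card_lt_card <|
      Finset.card_le_two.trans_lt (by rw [Finset.card_univ]; omega)
  obtain ⟨c, hc⟩ := Submodule.mem_span_singleton.mp (h (Pi.single v 1))
  rw [permRep_single] at hc
  simp only [Finset.mem_insert, Finset.mem_singleton, not_or] at hw
  -- `Pi.single (σ v) 1 - Pi.single v 1` vanishes at the third vertex `w` but not at `v`
  have hc0 : c = 0 := by simpa [hw.1, hw.2] using congrFun hc w
  have hcv := congrFun hc v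
  simp [hc0, Ne.symm hv] at hcv

theorem permRep_swap (x y : V) (f : V → ZMod 2) :
    permRep (ZMod 2) V (Equiv.swap x y) f =
      f + (f x + f y) • {v | v ∈ s(x, y)}.indicator 1 := by
  ext w
  rcases eq_or_ne w x with rfl | hwx
  · simp [permRep_apply, ← add_assoc, CharTwo.add_self_eq_zero]
  rcases eq_or_ne w y with rfl | hwy
  · simp [permRep_apply, add_comm (f x), ← add_assoc, CharTwo.add_self_eq_zero]
  simp [permRep_apply, Equiv.swap_apply_of_ne_of_ne hwx hwy, hwx, hwy]

end PermRep

section CutMap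

variable {V : Type*} (X : SimpleGraph V)

def cutMap : (V → ZMod 2) →ₗ[ZMod 2] (X.edgeSet → ZMod 2) where
  toFun f e := Sym2.lift ⟨fun x y => f x + f y, fun _ _ => add_comm _ _⟩ e.1
  map_add' f g := by
    ext ⟨e, -⟩
    induction e using Sym2.ind with
    | _ x y => simp only [Sym2.lift_mk, Pi.add_apply]; ring
  map_smul' c f := by
    ext ⟨e, -⟩
    induction e using Sym2.ind with
    | _ x y => simp only [Sym2.lift_mk, Pi.smul_apply, smul_eq_mul, RingHom.id_apply]; ring

theorem cutMap_indicator (U : Set V) : cutMap X (U.indicator 1) = edgeCut X U := by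
  ext ⟨e, -⟩
  induction e using Sym2.ind with
  | _ x y => simp [cutMap, edgeCut, edgeCutFun, Set.indicator_apply]

variable {X}

theorem ker_cutMap (hX : X.Connected) :
    LinearMap.ker (cutMap X) = Submodule.span (ZMod 2) {1} := by
  refine le_antisymm (fun f hf => ?_) ?_
  · have hadj : ∀ x y, X.Adj x y → f x = f y := fun x y hxy =>
      CharTwo.add_eq_zero.mp (congrFun (LinearMap.mem_ker.mp hf) ⟨s(x, y), hxy⟩)
    obtain ⟨v⟩ := hX.nonempty
    refine Submodule.mem_span_singleton.mpr ⟨f v, funext fun w => ?_⟩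
    simpa using hX.preconnected.rel_of_forall_adj (Setoid.ker f).iseqv hadj v w
  · rw [Submodule.span_le, Set.singleton_subset_iff, SetLike.mem_coe, LinearMap.mem_ker]
    ext ⟨e, -⟩
    induction e using Sym2.ind with
    | _ x y => exact CharTwo.add_self_eq_zero 1

theorem cutMap_surjective [Fintype V] (hX : X.Connected)
    (htree : X.edgeSet.ncard = Fintype.card V - 1) : Function.Surjective (cutMap X) := by
  have : Nonempty V := hX.nonempty
  have hker : Module.finrank (ZMod 2) (LinearMap.ker (cutMap X)) = 1 := by
    rw [ker_cutMap hX]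
    exact finrank_span_singleton one_ne_zero
  have hrank := LinearMap.finrank_range_add_finrank_ker (cutMap X)
  rw [hker, Module.finrank_fintype_fun_eq_card] at hrank
  rw [← LinearMap.range_eq_top]
  apply Submodule.eq_top_of_finrank_eq
  rw [Module.finrank_fintype_fun_eq_card, ← Nat.card_eq_fintype_card, Nat.card_coe_set_eq, htree]
  have := Fintype.card_pos (α := V)
  omega

end CutMap

section EdgePermRep

variable {V : Type*} {X : SimpleGraph V} (hX : X.Connected)
  (hsurj : Function.Surjective (cutMap X))

include hX in
theorem ker_cutMap_le_comap_permRep (σ : Equiv.Perm V) :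
    LinearMap.ker (cutMap X) ≤ (LinearMap.ker (cutMap X)).comap (permRep (ZMod 2) V σ) := by
  rw [ker_cutMap hX, Submodule.span_le, Set.singleton_subset_iff]
  exact Submodule.subset_span rfl

noncomputable def edgePermRep : Equiv.Perm V →* (Module.End (ZMod 2) (X.edgeSet → ZMod 2))ˣ :=
  MonoidHom.toHomUnits <|
    (((cutMap X).quotKerEquivOfSurjective hsurj).conjAlgEquiv (ZMod 2) :
        Module.End (ZMod 2) _ →* Module.End (ZMod 2) _).comp
      ((permRep (ZMod 2) V).quotient _ (ker_cutMap_le_comap_permRep hX))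

theorem edgePermRep_cutMap (σ : Equiv.Perm V) (f : V → ZMod 2) :
    (edgePermRep hX hsurj σ : Module.End (ZMod 2) _) (cutMap X f) =
      cutMap X (permRep (ZMod 2) V σ f) := by
  have hmk : ((cutMap X).quotKerEquivOfSurjective hsurj).symm (cutMap X f) =
      Submodule.Quotient.mk f :=
    ((cutMap X).quotKerEquivOfSurjective hsurj).symm_apply_eq.mpr rfl
  simp [edgePermRep, hmk]

theorem edgePermRep_injective [Fintype V] (hn : 3 ≤ Fintype.card V) :
    Function.Injective (edgePermRep hX hsurj) := by
  refine (injective_iff_map_eq_one _).mpr fun σ hσ => ?_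
  refine eq_one_of_forall_permRep_sub_mem_span_one (R := ZMod 2) hn fun f => ?_
  rw [← ker_cutMap hX, LinearMap.mem_ker, map_sub, ← edgePermRep_cutMap hX hsurj, hσ,
    Units.val_one, Module.End.one_apply, sub_self]

theorem edgePermRep_swap {x y : V} (h : s(x, y) ∈ X.edgeSet) :
    edgePermRep hX hsurj (Equiv.swap x y) = edgeFlip X ⟨s(x, y), h⟩ := by
  refine Units.ext <| (LinearMap.cancel_right hsurj).mp <| LinearMap.ext fun f => ?_
  simp only [LinearMap.comp_apply, edgePermRep_cutMap, permRep_swap, map_add, map_smul,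
    cutMap_indicator]
  -- `edgeFlip` adds `(cutMap X f ⟨s(x, y), h⟩) • E(s(x, y))`, and that coefficient is `f x + f y`
  rfl

theorem image_edgePermRep_swap_adj :
    edgePermRep hX hsurj '' {σ | ∃ x y, X.Adj x y ∧ Equiv.swap x y = σ} =
      Set.range (edgeFlip X) := by
  ext g
  constructor
  · rintro ⟨_, ⟨x, y, hxy, rfl⟩, rfl⟩
    exact ⟨_, (edgePermRep_swap hX hsurj hxy).symm⟩
  · rintro ⟨⟨e, he⟩, rfl⟩
    induction e using Sym2.ind with
    | _ x y => exact ⟨_, ⟨x, y, he, rfl⟩, edgePermRep_swap hX hsurj he⟩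

end EdgePermRep

/-- If `X` is a finite simple connected graph with `n ≥ 3` vertices which
is a tree (i.e. it has exactly `n - 1` edges), then the edge-flipping group `W_E(X)` is
isomorphic to the symmetric group of degree `n`. -/
theorem edgeFlippingGroup_of_tree {V : Type*} [Fintype V] (X : SimpleGraph V)
    (hconn : X.Connected) (hn : 3 ≤ Fintype.card V)
    (htree : X.edgeSet.ncard = Fintype.card V - 1) :
    Nonempty (↥(edgeFlippingGroup X) ≃* Equiv.Perm V) := by
  have hsurj := cutMap_surjective hconn htree
  have hrange : (edgePermRep hconn hsurj).range = edgeFlippingGroup X := by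
    rw [MonoidHom.range_eq_map, ← hconn.preconnected.closure_swap_adj_eq_top,
      MonoidHom.map_closure, image_edgePermRep_swap_adj, edgeFlippingGroup]
  exact ⟨(MulEquiv.subgroupCongr hrange.symm).trans
    (MonoidHom.ofInjective (edgePermRep_injective hconn hsurj hn)).symm⟩
end

section
/- Let X=(V,E) be a finite simple connected graph with n ≥ 3 vertices and let T be a spanning tree of E. Then the orbits of the bond space 𝓑 under the edge-flipping group W_E(X) coincide with the orbits of 𝓑 under the subgroup W_E(X)_T, and these orbits are exactly the sets Ω_i := {G ∈ 𝓑 : sw(G) = i or sw(G) = n − i} for i = 0, 1, …, ⌈(n−1)/2⌉. -/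
open scoped Classical

/-- The orbit of a configuration `G` under a subgroup `H` of `GL(𝓔)`. -/
def orbitOf {V : Type*} (X : SimpleGraph V)
    (H : Subgroup ((X.edgeSet → ZMod 2) →ₗ[ZMod 2] (X.edgeSet → ZMod 2))ˣ)
    (G : X.edgeSet → ZMod 2) : Set (X.edgeSet → ZMod 2) :=
  {G' | ∃ g ∈ H, g.val G = G'}

/-- `Ω_i`: the set of elements of the bond space of simple weight `i` or `n - i`
(with respect to the simple basis `{E(v) : v ≠ u}`). -/
def simpleOmega {V : Type*} [Fintype V] (X : SimpleGraph V) (u : V) (i : ℕ) :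
    Set (X.edgeSet → ZMod 2) :=
  {G | ∃ S : Finset V, u ∉ S ∧ (∑ v ∈ S, edgeCut X {v}) = G ∧
        (S.card = i ∨ S.card = Fintype.card V - i)}


/-!
A flip along the edge `xy` sends the cut `E(U)` to `E(τ U)`, where `τ` is the transposition of
`x` and `y`. Transpositions along the edges of the connected graph `(V, T)` generate the whole
symmetric group, so `W_E(X)_T` carries `E(S)` to `E(σ S)` for every permutation `σ` and is thus
transitive on the cuts `E(S)` with `|S|` fixed; as `E(S) = E(V \ S)`, each `Ω_i` lies in one
orbit. Conversely each flip preserves `|S|` up to complementation, so `W_E(X)` preserves `Ω_i`.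
-/

open scoped symmDiff Pointwise
open Equiv Finset

section

variable {V : Type*}

section EdgeCut

variable (X : SimpleGraph V)

lemma edgeCutFun_mk (U : Set V) (a b : V) :
    edgeCutFun U s(a, b) = (if a ∈ U then 1 else 0) + (if b ∈ U then 1 else 0) := rfl

lemma ite_mem_symmDiff (A B : Set V) (a : V) :
    (if a ∈ A ∆ B then (1 : ZMod 2) else 0) =
      (if a ∈ A then 1 else 0) + (if a ∈ B then 1 else 0) := by
  by_cases hA : a ∈ A <;> by_cases hB : a ∈ B <;> simp [Set.mem_symmDiff, hA, hB]
  decide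

lemma edgeCut_empty : edgeCut X ∅ = 0 := by
  funext ⟨e, _⟩
  induction e using Sym2.ind with
  | _ a b => simp [edgeCut, edgeCutFun_mk]

lemma edgeCut_univ : edgeCut X Set.univ = 0 := by
  funext ⟨e, _⟩
  induction e using Sym2.ind with
  | _ a b =>
    simp only [edgeCut, edgeCutFun_mk, Set.mem_univ, if_true, Pi.zero_apply]
    decide

lemma edgeCut_symmDiff (A B : Set V) :
    edgeCut X (A ∆ B) = edgeCut X A + edgeCut X B := by
  funext ⟨e, _⟩
  induction e using Sym2.ind with
  | _ a b =>
    simp only [edgeCut, Pi.add_apply, edgeCutFun_mk, ite_mem_symmDiff]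
    ring

lemma edgeCut_compl (U : Set V) : edgeCut X Uᶜ = edgeCut X U := by
  rw [← hnot_eq_compl, ← top_symmDiff, Set.top_eq_univ, edgeCut_symmDiff, edgeCut_univ,
    zero_add]

lemma sum_edgeCut_singleton (S : Finset V) : ∑ v ∈ S, edgeCut X {v} = edgeCut X S := by
  induction S using Finset.induction_on with
  | empty => rw [sum_empty, coe_empty, edgeCut_empty]
  | insert a S ha ih =>
    rw [sum_insert ha, ih, ← edgeCut_symmDiff, coe_insert, Set.insert_eq,
      Disjoint.symmDiff_eq_sup (Set.disjoint_singleton_left.mpr ha)]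
    rfl

lemma edgeCut_mem_bondSpace (S : Finset V) : edgeCut X S ∈ bondSpace X := by
  rw [← sum_edgeCut_singleton]
  exact Submodule.sum_mem _ fun v _ => edgeCut_single_mem_bondSpace X v

lemma exists_finset_edgeCut_eq {G : X.edgeSet → ZMod 2} (hG : G ∈ bondSpace X) :
    ∃ S : Finset V, edgeCut X S = G := by
  induction hG using Submodule.span_induction with
  | mem _ hG =>
    obtain ⟨v, rfl⟩ := hG
    exact ⟨{v}, by rw [coe_singleton]⟩
  | zero => exact ⟨∅, by rw [coe_empty, edgeCut_empty]⟩
  | add _ _ _ _ hG hH =>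
    obtain ⟨S, rfl⟩ := hG
    obtain ⟨S', rfl⟩ := hH
    exact ⟨S ∆ S', by rw [coe_symmDiff, edgeCut_symmDiff]⟩
  | smul c _ _ hG =>
    obtain ⟨S, rfl⟩ := hG
    obtain rfl | rfl : c = 0 ∨ c = 1 := by revert c; decide
    · exact ⟨∅, by rw [coe_empty, edgeCut_empty, zero_smul]⟩
    · exact ⟨S, (one_smul _ _).symm⟩

end EdgeCut

section EdgeFlip

variable (X : SimpleGraph V)

lemma edgeFlip_apply (ε : X.edgeSet) (G : X.edgeSet → ZMod 2) :
    (edgeFlip X ε).val G = G + G ε • edgeCut X {v | v ∈ (ε : Sym2 V)} := rfl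

lemma edgeFlip_inv (ε : X.edgeSet) : (edgeFlip X ε)⁻¹ = edgeFlip X ε := rfl

lemma swap_smul_set_of_mem_iff {x y : V} {U : Set V} (h : x ∈ U ↔ y ∈ U) :
    swap x y • U = U := by
  ext z
  rw [Set.mem_smul_set_iff_inv_smul_mem, swap_inv, Perm.smul_def, swap_apply_def]
  split_ifs with hx hy <;> simp_all

lemma swap_smul_set_of_not_mem_iff {x y : V} {U : Set V} (h : ¬(x ∈ U ↔ y ∈ U)) :
    swap x y • U = U ∆ {x, y} := by
  ext z
  rw [Set.mem_smul_set_iff_inv_smul_mem, swap_inv, Perm.smul_def, swap_apply_def]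
  split_ifs with hx hy <;> simp_all [Set.mem_symmDiff] <;> tauto

lemma edgeFlip_edgeCut (ε : X.edgeSet) {x y : V} (hε : (ε : Sym2 V) = s(x, y)) (U : Set V) :
    (edgeFlip X ε).val (edgeCut X U) = edgeCut X (swap x y • U) := by
  have hε' : {v | v ∈ (ε : Sym2 V)} = {x, y} := by ext; simp [hε]
  have hval : edgeCut X U ε = edgeCutFun U s(x, y) := congrArg (edgeCutFun U) hε
  rw [edgeFlip_apply, hε', hval]
  by_cases h : x ∈ U ↔ y ∈ U
  · have hzero : edgeCutFun U s(x, y) = 0 := by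
      by_cases hx : x ∈ U <;> simp [edgeCutFun_mk, hx, ← h]
      decide
    rw [swap_smul_set_of_mem_iff h, hzero, zero_smul, add_zero]
  · have hone : edgeCutFun U s(x, y) = 1 := by
      by_cases hx : x ∈ U <;> simp_all [edgeCutFun_mk]
    rw [swap_smul_set_of_not_mem_iff h, hone, one_smul, edgeCut_symmDiff]

end EdgeFlip

section FlipGroups

variable (X : SimpleGraph V)

/-- `W_E(X)_T`. -/
def edgeFlippingGroupOn (T : Set (Sym2 V)) :
    Subgroup ((X.edgeSet → ZMod 2) →ₗ[ZMod 2] (X.edgeSet → ZMod 2))ˣ :=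
  Subgroup.closure {g | ∃ ε : X.edgeSet, (ε : Sym2 V) ∈ T ∧ g = edgeFlip X ε}

lemma edgeFlippingGroupOn_le (T : Set (Sym2 V)) :
    edgeFlippingGroupOn X T ≤ edgeFlippingGroup X :=
  Subgroup.closure_le _ |>.mpr fun _ ⟨ε, _, hg⟩ => Subgroup.subset_closure ⟨ε, hg.symm⟩

lemma orbitOf_mono {H K : Subgroup ((X.edgeSet → ZMod 2) →ₗ[ZMod 2] (X.edgeSet → ZMod 2))ˣ}
    (hHK : H ≤ K) (G : X.edgeSet → ZMod 2) : orbitOf X H G ⊆ orbitOf X K G :=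
  fun _ ⟨g, hg, hgG⟩ => ⟨g, hHK hg, hgG⟩

lemma mapsTo_of_mem_edgeFlippingGroup {Ω : Set (X.edgeSet → ZMod 2)}
    (hΩ : ∀ ε, Set.MapsTo (edgeFlip X ε).val Ω Ω) {g} (hg : g ∈ edgeFlippingGroup X) :
    Set.MapsTo g.val Ω Ω := by
  induction hg using Subgroup.closure_induction'' with
  | mem _ hg =>
    obtain ⟨ε, rfl⟩ := hg
    exact hΩ ε
  | inv_mem _ hg =>
    obtain ⟨ε, rfl⟩ := hg
    exact edgeFlip_inv X ε ▸ hΩ ε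
  | one => exact Set.mapsTo_id Ω
  | mul _ _ _ _ hg hh => exact hg.comp hh

end FlipGroups

lemma SimpleGraph.Connected.closure_swap_adj_eq_top [Finite V] {H : SimpleGraph V}
    (hH : H.Connected) :
    Subgroup.closure {σ : Perm V | ∃ x y, H.Adj x y ∧ σ = swap x y} = ⊤ := by
  set S := {σ : Perm V | ∃ x y, H.Adj x y ∧ σ = swap x y}
  have hS : ∀ σ ∈ S, σ.IsSwap := fun _ ⟨x, y, hxy, hσ⟩ => ⟨x, y, hxy.ne, hσ⟩
  have horbit {x y : V} (w : H.Walk x y) : y ∈ MulAction.orbit (Subgroup.closure S) x := by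
    induction w with
    | nil => exact MulAction.mem_orbit_self _
    | @cons a b _ hab _ ih =>
      have hb : b ∈ MulAction.orbit (Subgroup.closure S) a :=
        ⟨⟨swap a b, Subgroup.subset_closure ⟨a, b, hab, rfl⟩⟩, swap_apply_left a b⟩
      rwa [← MulAction.orbit_eq_iff.mpr hb]
  refine (Subgroup.eq_top_iff' _).mpr fun σ => (mem_closure_isSwap hS).mpr ?_
  exact ⟨Set.toFinite _, fun x => horbit (hH.preconnected x (σ x)).some⟩

section Transitivity

variable (X : SimpleGraph V) (T : Set (Sym2 V))

def cutPermGroup : Subgroup (Perm V) where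
  carrier := {σ | ∀ U : Set V, ∃ g ∈ edgeFlippingGroupOn X T,
    g.val (edgeCut X U) = edgeCut X (σ • U)}
  one_mem' U := ⟨1, one_mem _, by rw [one_smul]; rfl⟩
  mul_mem' {σ τ} hσ hτ U := by
    obtain ⟨g, hg, hgU⟩ := hτ U
    obtain ⟨h, hh, hhU⟩ := hσ (τ • U)
    refine ⟨h * g, mul_mem hh hg, ?_⟩
    rw [mul_smul, ← hhU, ← hgU]
    rfl
  inv_mem' {σ} hσ U := by
    obtain ⟨g, hg, hgU⟩ := hσ (σ⁻¹ • U)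
    refine ⟨g⁻¹, inv_mem hg, ?_⟩
    rw [smul_inv_smul] at hgU
    rw [← hgU, ← Module.End.mul_apply, ← Units.val_mul, inv_mul_cancel, Units.val_one,
      Module.End.one_apply]

variable {X T}

lemma cutPermGroup_eq_top [Finite V] (hTsub : T ⊆ X.edgeSet)
    (hTconn : (SimpleGraph.fromEdgeSet T).Connected) : cutPermGroup X T = ⊤ := by
  rw [eq_top_iff, ← hTconn.closure_swap_adj_eq_top, Subgroup.closure_le]
  rintro _ ⟨x, y, hxy, rfl⟩ U
  have hT : s(x, y) ∈ T := ((SimpleGraph.fromEdgeSet_adj T).mp hxy).1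
  exact ⟨edgeFlip X ⟨_, hTsub hT⟩, Subgroup.subset_closure ⟨_, hT, rfl⟩,
    edgeFlip_edgeCut X _ rfl U⟩

lemma exists_edgeFlippingGroupOn_edgeCut_eq [Finite V] (hTsub : T ⊆ X.edgeSet)
    (hTconn : (SimpleGraph.fromEdgeSet T).Connected) {S S' : Finset V} (h : #S = #S') :
    ∃ g ∈ edgeFlippingGroupOn X T, g.val (edgeCut X S) = edgeCut X S' := by
  obtain ⟨σ, hσ⟩ := (Set.powersetCard.isPretransitive (α := V) (n := #S')).exists_smul_eq
    ⟨S, h⟩ ⟨S', rfl⟩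
  have hσS : σ • (S : Set V) = S' := by
    rw [← coe_smul_finset]
    exact congrArg (fun s : Set.powersetCard V #S' => ((s : Finset V) : Set V)) hσ
  rw [← hσS]
  have hσT : σ ∈ cutPermGroup X T := cutPermGroup_eq_top hTsub hTconn ▸ Subgroup.mem_top σ
  exact hσT S

end Transitivity

section SimpleOmega

variable [Fintype V] (X : SimpleGraph V) (u : V) {i : ℕ}

lemma edgeCut_mem_simpleOmega (hi : i ≤ Fintype.card V) {S : Finset V}
    (hS : #S = i ∨ #S = Fintype.card V - i) : edgeCut X S ∈ simpleOmega X u i := by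
  by_cases hu : u ∈ S
  · refine ⟨Sᶜ, notMem_compl.mpr hu, ?_, ?_⟩
    · rw [sum_edgeCut_singleton, coe_compl, edgeCut_compl]
    · have := S.card_le_univ
      rw [card_compl]
      omega
  · exact ⟨S, hu, sum_edgeCut_singleton X S, hS⟩

lemma edgeFlip_mapsTo_simpleOmega (hi : i ≤ Fintype.card V) (ε : X.edgeSet) :
    Set.MapsTo (edgeFlip X ε).val (simpleOmega X u i) (simpleOmega X u i) := by
  rintro _ ⟨S, -, rfl, hS⟩
  obtain ⟨x, y, hε⟩ : ∃ x y, (ε : Sym2 V) = s(x, y) := Sym2.exists.mp ⟨_, rfl⟩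
  rw [sum_edgeCut_singleton, edgeFlip_edgeCut X ε hε, ← coe_smul_finset]
  exact edgeCut_mem_simpleOmega X u hi (by rwa [card_smul_finset])

lemma orbitOf_edgeCut_eq_simpleOmega {T : Set (Sym2 V)} (hTsub : T ⊆ X.edgeSet)
    (hTconn : (SimpleGraph.fromEdgeSet T).Connected) (hi : i ≤ Fintype.card V) {S : Finset V}
    (hS : #S = i ∨ #S = Fintype.card V - i) :
    orbitOf X (edgeFlippingGroupOn X T) (edgeCut X S) = simpleOmega X u i ∧
      orbitOf X (edgeFlippingGroup X) (edgeCut X S) = simpleOmega X u i := by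
  have hW : orbitOf X (edgeFlippingGroup X) (edgeCut X S) ⊆ simpleOmega X u i := by
    rintro _ ⟨g, hg, rfl⟩
    exact mapsTo_of_mem_edgeFlippingGroup X (edgeFlip_mapsTo_simpleOmega X u hi) hg
      (edgeCut_mem_simpleOmega X u hi hS)
  have hT : simpleOmega X u i ⊆ orbitOf X (edgeFlippingGroupOn X T) (edgeCut X S) := by
    rintro _ ⟨S', -, rfl, hS'⟩
    obtain ⟨S'', hcard, hcut⟩ :
        ∃ S'' : Finset V, #S = #S'' ∧ edgeCut X S'' = edgeCut X S' := by
      by_cases h : #S = #S'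
      · exact ⟨S', h, rfl⟩
      · refine ⟨S'ᶜ, ?_, by rw [coe_compl, edgeCut_compl]⟩
        have := S.card_le_univ
        have := S'.card_le_univ
        rw [card_compl]
        omega
    rw [sum_edgeCut_singleton, ← hcut]
    exact exists_edgeFlippingGroupOn_edgeCut_eq hTsub hTconn hcard
  have hTW := orbitOf_mono X (edgeFlippingGroupOn_le X T) (edgeCut X S)
  exact ⟨(hTW.trans hW).antisymm hT, hW.antisymm (hT.trans hTW)⟩

end SimpleOmega

end

/-- The bound `i ≤ n / 2` is the paper's `i ≤ ⌈(n - 1) / 2⌉`, in natural division. -/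
theorem orbits_of_bondSpace_general {V : Type*} [Fintype V] (X : SimpleGraph V)
    (T : Set (Sym2 V)) (hTsub : T ⊆ X.edgeSet)
    (hTconn : (SimpleGraph.fromEdgeSet T).Connected) (u : V) :
    (∀ G ∈ bondSpace X,
      orbitOf X (edgeFlippingGroup X) G
        = orbitOf X (Subgroup.closure
            {g | ∃ ε : X.edgeSet, (ε : Sym2 V) ∈ T ∧ g = edgeFlip X ε}) G) ∧
    (∀ G ∈ bondSpace X, ∃ i ≤ Fintype.card V / 2,
      orbitOf X (edgeFlippingGroup X) G = simpleOmega X u i) ∧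
    (∀ i ≤ Fintype.card V / 2, ∃ G ∈ bondSpace X,
      orbitOf X (edgeFlippingGroup X) G = simpleOmega X u i) := by
  have orbit_eq {i : ℕ} (hi : i ≤ Fintype.card V) {S : Finset V}
      (hS : #S = i ∨ #S = Fintype.card V - i) :=
    orbitOf_edgeCut_eq_simpleOmega X u hTsub hTconn hi hS
  refine ⟨fun G hG => ?_, fun G hG => ?_, fun i hi => ?_⟩
  · obtain ⟨S, rfl⟩ := exists_finset_edgeCut_eq X hG
    obtain ⟨hT, hW⟩ := orbit_eq S.card_le_univ (Or.inl rfl)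
    exact hW.trans hT.symm
  · obtain ⟨S, rfl⟩ := exists_finset_edgeCut_eq X hG
    have := S.card_le_univ
    exact ⟨min #S (Fintype.card V - #S), by omega, (orbit_eq (by omega) (by omega)).2⟩
  · have hin : i ≤ Fintype.card V := hi.trans (Nat.div_le_self _ _)
    obtain ⟨S, -, hS⟩ :=
      exists_subset_card_eq (s := (univ : Finset V)) (n := i) (by rwa [card_univ])
    exact ⟨edgeCut X S, edgeCut_mem_bondSpace X S, (orbit_eq hin (Or.inl hS)).2⟩

/-- For a finite simple connected graph `X` with `n ≥ 3` vertices, a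
spanning tree `T` and a fixed vertex `u`: the orbits of the bond space `𝓑` under `W_E(X)`
coincide with the orbits under `W_E(X)_T`, and these orbits are exactly the sets
`Ω_i = {G ∈ 𝓑 : sw(G) = i or n - i}` for `i = 0, 1, …, ⌈(n-1)/2⌉` (note
`⌈(n-1)/2⌉ = n / 2` in natural division). -/
theorem orbits_of_bondSpace {V : Type*} [Fintype V] (X : SimpleGraph V)
    (hconn : X.Connected) (hn : 3 ≤ Fintype.card V)
    (T : Set (Sym2 V)) (hTsub : T ⊆ X.edgeSet)
    (hTcard : T.ncard = Fintype.card V - 1)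
    (hTconn : (SimpleGraph.fromEdgeSet T).Connected) (u : V) :
    (∀ G ∈ bondSpace X,
      orbitOf X (edgeFlippingGroup X) G
        = orbitOf X (Subgroup.closure
            {g | ∃ ε : X.edgeSet, (ε : Sym2 V) ∈ T ∧ g = edgeFlip X ε}) G) ∧
    (∀ G ∈ bondSpace X, ∃ i ≤ Fintype.card V / 2,
      orbitOf X (edgeFlippingGroup X) G = simpleOmega X u i) ∧
    (∀ i ≤ Fintype.card V / 2, ∃ G ∈ bondSpace X,
      orbitOf X (edgeFlippingGroup X) G = simpleOmega X u i) :=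
  orbits_of_bondSpace_general X T hTsub hTconn u
end

section
/- Let Y=(Z,H) be the finite simple connected graph with vertex set Z = {0,1,…,m−1} (m ≥ 2) and edge set H = {{1,2},{2,3},…,{m−2,m−1}} ∪ {{0,i_1},…,{0,i_ℓ}} where 1 ≤ i_1 < i_2 < ⋯ < i_ℓ ≤ m−1, and let π_1 be its value, defined as π_1 = Σ_{t=1}^{ℓ} (−1)^t i_t if ℓ is even, and π_1 = Σ_{t=1}^{ℓ} (−1)^t i_t + m if ℓ is odd. If Y is isomorphic to the line graph L(X) of some finite simple connected graph X, then π_1 ∈ {1, 2, m−2, m−1}. -/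
open scoped Classical

/-- The graph `Y` on `Z = {0, 1, …, m-1}`: the path `1 - 2 - ⋯ - (m-1)` together with the
edges `{0, i}` for `i` in the set `I = {i_1 < i_2 < ⋯ < i_ℓ} ⊆ {1, …, m-1}`. -/
def Ygraph (m : ℕ) (I : Finset ℕ) : SimpleGraph (Fin m) where
  Adj a b := (a.val + 1 = b.val ∧ 1 ≤ a.val) ∨ (b.val + 1 = a.val ∧ 1 ≤ b.val)
    ∨ (a.val = 0 ∧ b.val ∈ I ∧ 1 ≤ b.val) ∨ (b.val = 0 ∧ a.val ∈ I ∧ 1 ≤ a.val)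
  symm := ⟨fun a b h => by tauto⟩
  loopless := ⟨fun a h => by
    rcases h with ⟨h1, h2⟩ | ⟨h1, h2⟩ | ⟨h1, h2, h3⟩ | ⟨h1, h2, h3⟩ <;> omega⟩

/-- The value `π₁` of the graph `Y`: with `I = {i_1 < ⋯ < i_ℓ}`, it is
`∑_{t=1}^{ℓ} (-1)^t i_t`, plus `m` if `ℓ` is odd. -/
def piOne (m : ℕ) (I : Finset ℕ) : ℤ :=
  (∑ t ∈ Finset.range I.card, (-1 : ℤ) ^ (t + 1) * ((I.sort (· ≤ ·)).getD t 0)) +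
    if Even I.card then 0 else (m : ℤ)

/-!
Let `φ : Y ≃g L(X)` and let `φ 0 = xy`. The neighbours of `0` in `Y` are the edges through `x` or
through `y`, never through both since `X` is simple, so `I` is the disjoint union of the sets
`I_x`, `I_y` of path vertices whose edge passes through `x`, resp. `y`. Edges through a common
vertex of `X` are pairwise adjacent in `L(X)`, so each `I_u` is a clique of the path: empty, a
single vertex, or two consecutive vertices. The edge of an interior path vertex `a` meets the
edges of `a - 1` and `a + 1` in two distinct endpoints (these two edges are not adjacent), so
every vertex of edge `a` lies in one of them and a singleton `I_u = {a}` forces `a ∈ {1, m - 1}`.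
The few shapes of `I` that remain give `π₁ ∈ {1, 2, m - 2, m - 1}` by direct computation.
-/

theorem piOne_eq_of_sorted {m : ℕ} {I : Finset ℕ} {l : List ℕ} (hl : l.Pairwise (· < ·))
    (hlI : l.toFinset = I) :
    piOne m I = (∑ t ∈ Finset.range l.length, (-1 : ℤ) ^ (t + 1) * (l.getD t 0)) +
      if Even l.length then 0 else (m : ℤ) := by
  have hsort : I.sort (· ≤ ·) = l := by
    subst hlI
    exact (List.toFinset_sort _ hl.nodup).2 (hl.imp le_of_lt)
  rw [piOne, ← hsort, Finset.length_sort]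

theorem piOne_singleton (m a : ℕ) : piOne m {a} = (m : ℤ) - a := by
  rw [piOne_eq_of_sorted (l := [a]) (by simp) (by simp)]
  simp only [List.length_cons, List.length_nil, Finset.sum_range_succ, Finset.sum_range_zero,
    List.getD_cons_zero]
  norm_num
  ring

theorem piOne_pair {a b : ℕ} (m : ℕ) (hab : a < b) : piOne m {a, b} = (b : ℤ) - a := by
  rw [piOne_eq_of_sorted (l := [a, b]) (by simp [hab]) (by simp)]
  simp only [List.length_cons, List.length_nil, Finset.sum_range_succ, Finset.sum_range_zero,
    List.getD_cons_zero, List.getD_cons_succ]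
  norm_num
  ring

theorem piOne_triple {a b c : ℕ} (m : ℕ) (hab : a < b) (hbc : b < c) :
    piOne m {a, b, c} = (m : ℤ) - a + b - c := by
  rw [piOne_eq_of_sorted (l := [a, b, c]) (by simp [hab, hbc, hab.trans hbc]) (by simp)]
  simp only [List.length_cons, List.length_nil, Finset.sum_range_succ, Finset.sum_range_zero,
    List.getD_cons_zero, List.getD_cons_succ]
  norm_num [Nat.even_iff]
  ring

theorem piOne_quadruple {a b c d : ℕ} (m : ℕ) (hab : a < b) (hbc : b < c) (hcd : c < d) :
    piOne m {a, b, c, d} = (d : ℤ) - c + b - a := by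
  rw [piOne_eq_of_sorted (l := [a, b, c, d])
    (by simp [hab, hbc, hcd, hab.trans hbc, hbc.trans hcd, (hab.trans hbc).trans hcd]) (by simp)]
  simp only [List.length_cons, List.length_nil, Finset.sum_range_succ, Finset.sum_range_zero,
    List.getD_cons_zero, List.getD_cons_succ]
  norm_num
  ring

/-- The possible sets of path vertices `i ≥ 1` of `Ygraph m I` whose edges, under an isomorphism
with a line graph `L(X)`, pass through one common vertex of `X`. -/
inductive SideSet (m : ℕ) : Finset ℕ → Prop
  | empty : SideSet m ∅
  | pair (a : ℕ) (ha : 1 ≤ a) (ham : a + 2 ≤ m) : SideSet m {a, a + 1}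
  | first : SideSet m {1}
  | last (hm : 2 ≤ m) : SideSet m {m - 1}

namespace SideSet

variable {m : ℕ} {A B : Finset ℕ}

theorem of_consecutive {S : Finset ℕ} (hS : ∀ i ∈ S, 1 ≤ i ∧ i + 1 ≤ m)
    (hconsec : ∀ i ∈ S, ∀ j ∈ S, i < j → j = i + 1)
    (hinner : ∀ a ∈ S, 2 ≤ a → a + 2 ≤ m → a - 1 ∈ S ∨ a + 1 ∈ S) : SideSet m S := by
  rcases S.eq_empty_or_nonempty with rfl | hne
  · exact .empty
  set a := S.min' hne
  have ha : a ∈ S := S.min'_mem hne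
  have hmin : ∀ j ∈ S, a ≤ j := fun j hj => S.min'_le j hj
  have hj_eq : ∀ j ∈ S, j = a ∨ j = a + 1 := fun j hj =>
    (hmin j hj).eq_or_lt.imp Eq.symm (hconsec a ha j hj)
  obtain ⟨ha1, ham⟩ := hS a ha
  by_cases hsucc : a + 1 ∈ S
  · have hS_eq : S = {a, a + 1} := by
      ext j
      simp only [Finset.mem_insert, Finset.mem_singleton]
      exact ⟨hj_eq j, by rintro (rfl | rfl) <;> assumption⟩
    rw [hS_eq]
    exact .pair a ha1 (by have := (hS _ hsucc).2; omega)
  · have hS_eq : S = {a} := Finset.eq_singleton_iff_unique_mem.2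
      ⟨ha, fun j hj => (hj_eq j hj).resolve_right (by rintro rfl; exact hsucc hj)⟩
    have hboundary : a = 1 ∨ a = m - 1 := by
      by_contra! h
      rcases hinner a ha (by omega) (by omega) with hpred | hsucc'
      · have := hmin _ hpred; omega
      · exact hsucc hsucc'
    rw [hS_eq]
    rcases hboundary with h | h
    · rw [h]; exact .first
    · rw [h]; exact .last (by omega)

theorem piOne_mem (hA : SideSet m A) (hne : A.Nonempty) :
    piOne m A ∈ ({1, 2, (m : ℤ) - 2, (m : ℤ) - 1} : Set ℤ) := by
  simp only [Set.mem_insert_iff, Set.mem_singleton_iff]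
  rcases hA with _ | ⟨a, -, -⟩ | _ | hm
  · exact absurd hne Finset.not_nonempty_empty
  · rw [piOne_pair m (Nat.lt_succ_self a)]; omega
  · rw [piOne_singleton]; omega
  · rw [piOne_singleton]; omega

theorem piOne_pair_union_mem {a : ℕ} (ha : 1 ≤ a) (ham : a + 2 ≤ m) (hB : SideSet m B)
    (hdisj : Disjoint {a, a + 1} B) :
    piOne m ({a, a + 1} ∪ B) ∈ ({1, 2, (m : ℤ) - 2, (m : ℤ) - 1} : Set ℤ) := by
  have hnotin : a ∉ B ∧ a + 1 ∉ B := by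
    simpa only [Finset.disjoint_insert_left, Finset.disjoint_singleton_left] using hdisj
  simp only [Set.mem_insert_iff, Set.mem_singleton_iff]
  rcases hB with _ | ⟨b, hb, hbm⟩ | _ | hm
  · rw [Finset.union_empty, piOne_pair m (Nat.lt_succ_self a)]; omega
  · simp only [Finset.mem_insert, Finset.mem_singleton, not_or] at hnotin
    obtain ⟨⟨hab, hab'⟩, hba, -⟩ := hnotin
    rcases Nat.lt_or_gt_of_ne hab with hab | hab
    · rw [show ({a, a + 1} ∪ {b, b + 1} : Finset ℕ) = {a, a + 1, b, b + 1} by grind,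
        piOne_quadruple m (by omega) (by omega) (by omega)]
      omega
    · rw [show ({a, a + 1} ∪ {b, b + 1} : Finset ℕ) = {b, b + 1, a, a + 1} by grind,
        piOne_quadruple m (by omega) (by omega) (by omega)]
      omega
  · simp only [Finset.mem_singleton] at hnotin
    rw [show ({a, a + 1} ∪ {1} : Finset ℕ) = {1, a, a + 1} by grind,
      piOne_triple m (by omega) (by omega)]
    omega
  · simp only [Finset.mem_singleton] at hnotin
    rw [show ({a, a + 1} ∪ {m - 1} : Finset ℕ) = {a, a + 1, m - 1} by grind,
      piOne_triple m (by omega) (by omega)]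
    omega

theorem piOne_one_union_last (hm : 2 ≤ m) (hdisj : Disjoint ({1} : Finset ℕ) {m - 1}) :
    piOne m ({1} ∪ {m - 1}) ∈ ({1, 2, (m : ℤ) - 2, (m : ℤ) - 1} : Set ℤ) := by
  rw [Finset.disjoint_singleton] at hdisj
  rw [Finset.singleton_union, piOne_pair m (by omega)]
  simp only [Set.mem_insert_iff, Set.mem_singleton_iff]
  omega

theorem piOne_union_mem (hA : SideSet m A) (hB : SideSet m B) (hdisj : Disjoint A B)
    (hne : (A ∪ B).Nonempty) :
    piOne m (A ∪ B) ∈ ({1, 2, (m : ℤ) - 2, (m : ℤ) - 1} : Set ℤ) := by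
  rcases hA with _ | ⟨a, ha, ham⟩ | _ | hm
  · rw [Finset.empty_union] at hne ⊢; exact hB.piOne_mem hne
  · exact piOne_pair_union_mem ha ham hB hdisj
  all_goals rcases hB with _ | ⟨b, hb, hbm⟩ | _ | hm'
  · exact SideSet.first.piOne_mem (by simp)
  · rw [Finset.union_comm]; exact piOne_pair_union_mem hb hbm .first hdisj.symm
  · simp at hdisj
  · exact piOne_one_union_last hm' hdisj
  · exact (SideSet.last hm).piOne_mem (by simp)
  · rw [Finset.union_comm]; exact piOne_pair_union_mem hb hbm (.last hm) hdisj.symm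
  · rw [Finset.union_comm]; exact piOne_one_union_last hm hdisj.symm
  · simp at hdisj

end SideSet

namespace SimpleGraph

variable {W V : Type*} {X : SimpleGraph W}

theorem mem_or_mem_of_lineGraph_adj {ε α β : X.edgeSet} (hα : X.lineGraph.Adj ε α)
    (hβ : X.lineGraph.Adj ε β) (hαβ : ¬X.lineGraph.Adj α β) (hne : α ≠ β) {u : W}
    (hu : u ∈ (ε : Sym2 W)) : u ∈ (α : Sym2 W) ∨ u ∈ (β : Sym2 W) := by
  obtain ⟨-, p, hpε, hpα⟩ := lineGraph_adj_iff_exists.1 hα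
  obtain ⟨-, q, hqε, hqβ⟩ := lineGraph_adj_iff_exists.1 hβ
  have hpq : p ≠ q := by
    rintro rfl
    exact hαβ (lineGraph_adj_iff_exists.2 ⟨hne, p, hpα, hqβ⟩)
  rw [(Sym2.mem_and_mem_iff hpq).1 ⟨hpε, hqε⟩, Sym2.mem_iff] at hu
  rcases hu with rfl | rfl
  exacts [Or.inl hpα, Or.inr hqβ]

theorem Iso.adj_iff_exists_mem_of_lineGraph {G : SimpleGraph V} (φ : G ≃g X.lineGraph)
    {v w : V} : G.Adj v w ↔ v ≠ w ∧ ∃ u, u ∈ (φ v : Sym2 W) ∧ u ∈ (φ w : Sym2 W) := by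
  rw [← φ.map_adj_iff, lineGraph_adj_iff_exists, φ.injective.ne_iff]

end SimpleGraph

section Ygraph

variable {m : ℕ} {I : Finset ℕ}

theorem ygraph_adj_of_val_eq_zero {v w : Fin m} (hv : v.val = 0) (hw : w.val ≠ 0) :
    (Ygraph m I).Adj v w ↔ w.val ∈ I := by
  simp only [Ygraph]
  grind

theorem ygraph_adj_of_val_ne_zero {v w : Fin m} (hv : v.val ≠ 0) (hw : w.val ≠ 0) :
    (Ygraph m I).Adj v w ↔ v.val + 1 = w.val ∨ w.val + 1 = v.val := by
  simp only [Ygraph]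
  omega

variable {W : Type*} {X : SimpleGraph W}

noncomputable def pathIndicesThrough (φ : Ygraph m I ≃g X.lineGraph) (u : W) : Finset ℕ :=
  (Finset.univ.filter fun v : Fin m => v.val ≠ 0 ∧ u ∈ (φ v : Sym2 W)).image Fin.val

theorem mem_pathIndicesThrough {φ : Ygraph m I ≃g X.lineGraph} {u : W} {i : ℕ} :
    i ∈ pathIndicesThrough φ u ↔ ∃ h : i < m, i ≠ 0 ∧ u ∈ (φ ⟨i, h⟩ : Sym2 W) := by
  simp only [pathIndicesThrough, Finset.mem_image, Finset.mem_filter, Finset.mem_univ, true_and]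
  constructor
  · rintro ⟨v, ⟨hv0, hu⟩, rfl⟩
    exact ⟨v.isLt, hv0, hu⟩
  · rintro ⟨h, hi0, hu⟩
    exact ⟨⟨i, h⟩, ⟨hi0, hu⟩, rfl⟩

theorem sideSet_pathIndicesThrough (φ : Ygraph m I ≃g X.lineGraph) (u : W) :
    SideSet m (pathIndicesThrough φ u) := by
  refine SideSet.of_consecutive (fun i hi => ?_) (fun i hi j hj hij => ?_)
    (fun a ha h2a ham => ?_)
  · obtain ⟨h, hi0, -⟩ := mem_pathIndicesThrough.1 hi
    omega
  · obtain ⟨hi, hi0, hui⟩ := mem_pathIndicesThrough.1 hi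
    obtain ⟨hj, hj0, huj⟩ := mem_pathIndicesThrough.1 hj
    have hadj : (Ygraph m I).Adj ⟨i, hi⟩ ⟨j, hj⟩ :=
      φ.adj_iff_exists_mem_of_lineGraph.2 ⟨by simp [hij.ne], u, hui, huj⟩
    rw [ygraph_adj_of_val_ne_zero hi0 hj0, Fin.val_mk, Fin.val_mk] at hadj
    omega
  · obtain ⟨ha, ha0, hua⟩ := mem_pathIndicesThrough.1 ha
    have hadj (i j : ℕ) (hi : i < m) (hj : j < m) (hi0 : i ≠ 0) (hj0 : j ≠ 0) :
        X.lineGraph.Adj (φ ⟨i, hi⟩) (φ ⟨j, hj⟩) ↔ i + 1 = j ∨ j + 1 = i :=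
      φ.map_adj_iff.trans (ygraph_adj_of_val_ne_zero hi0 hj0)
    rcases SimpleGraph.mem_or_mem_of_lineGraph_adj
      ((hadj a (a - 1) ha (by omega) ha0 (by omega)).2 (by omega))
      ((hadj a (a + 1) ha ham ha0 (by omega)).2 (by omega))
      (fun h => by have := (hadj (a - 1) (a + 1) (by omega) ham (by omega) (by omega)).1 h; omega)
      (φ.injective.ne (by simp only [ne_eq, Fin.mk.injEq]; omega)) hua with h | h
    · exact Or.inl (mem_pathIndicesThrough.2 ⟨_, by omega, h⟩)
    · exact Or.inr (mem_pathIndicesThrough.2 ⟨_, by omega, h⟩)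

theorem pathIndicesThrough_subset {φ : Ygraph m I ≃g X.lineGraph} {v₀ : Fin m}
    (hv₀ : v₀.val = 0) {u : W} (hu : u ∈ (φ v₀ : Sym2 W)) : pathIndicesThrough φ u ⊆ I := by
  intro i hi
  obtain ⟨h, hi0, hui⟩ := mem_pathIndicesThrough.1 hi
  have hne : v₀ ≠ ⟨i, h⟩ := fun h' => hi0 (by rw [← hv₀, h'])
  exact (ygraph_adj_of_val_eq_zero hv₀ hi0).1
    (φ.adj_iff_exists_mem_of_lineGraph.2 ⟨hne, u, hu, hui⟩)

theorem exists_disjoint_union_pathIndicesThrough (φ : Ygraph m I ≃g X.lineGraph) (hm : 0 < m)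
    (hI : ∀ i ∈ I, 1 ≤ i ∧ i ≤ m - 1) :
    ∃ x y : W, Disjoint (pathIndicesThrough φ x) (pathIndicesThrough φ y) ∧
      pathIndicesThrough φ x ∪ pathIndicesThrough φ y = I := by
  set v₀ : Fin m := ⟨0, hm⟩
  obtain ⟨x, y, hxy⟩ : ∃ x y, (φ v₀ : Sym2 W) = s(x, y) := ⟨_, _, (Quot.out_eq _).symm⟩
  have hx : x ∈ (φ v₀ : Sym2 W) := hxy ▸ Sym2.mem_mk_left x y
  have hy : y ∈ (φ v₀ : Sym2 W) := hxy ▸ Sym2.mem_mk_right x y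
  have hne : x ≠ y := X.ne_of_adj (by rw [← SimpleGraph.mem_edgeSet, ← hxy]; exact (φ v₀).2)
  refine ⟨x, y, Finset.disjoint_left.2 fun i hix hiy => ?_, ?_⟩
  · obtain ⟨h, hi0, hxi⟩ := mem_pathIndicesThrough.1 hix
    obtain ⟨_, -, hyi⟩ := mem_pathIndicesThrough.1 hiy
    have : φ ⟨i, h⟩ = φ v₀ := Subtype.ext (Sym2.eq_of_ne_mem hne hxi hyi hx hy)
    exact hi0 (congrArg Fin.val (φ.injective this))
  refine (Finset.union_subset (pathIndicesThrough_subset rfl hx)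
    (pathIndicesThrough_subset rfl hy)).antisymm fun i hi => ?_
  obtain ⟨hi1, him⟩ := hI i hi
  have hadj : (Ygraph m I).Adj v₀ ⟨i, by omega⟩ :=
    (ygraph_adj_of_val_eq_zero rfl (show i ≠ 0 by omega)).2 hi
  obtain ⟨-, u, hu₀, hui⟩ := φ.adj_iff_exists_mem_of_lineGraph.1 hadj
  rw [hxy, Sym2.mem_iff] at hu₀
  rw [Finset.mem_union, mem_pathIndicesThrough, mem_pathIndicesThrough]
  rcases hu₀ with rfl | rfl
  exacts [Or.inl ⟨_, by omega, hui⟩, Or.inr ⟨_, by omega, hui⟩]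

end Ygraph

theorem piOne_of_lineGraph_general (m : ℕ) (I : Finset ℕ)
    (hI : ∀ i ∈ I, 1 ≤ i ∧ i ≤ m - 1) (hne : I.Nonempty)
    {W : Type*} (X : SimpleGraph W)
    (hiso : Nonempty (Ygraph m I ≃g SimpleGraph.lineGraph X)) :
    piOne m I ∈ ({1, 2, (m : ℤ) - 2, (m : ℤ) - 1} : Set ℤ) := by
  obtain ⟨φ⟩ := hiso
  have hm : 0 < m := by
    obtain ⟨i, hi⟩ := hne
    have := hI i hi
    omega
  obtain ⟨x, y, hdisj, hunion⟩ := exists_disjoint_union_pathIndicesThrough φ hm hI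
  rw [← hunion] at hne ⊢
  exact (sideSet_pathIndicesThrough φ x).piOne_union_mem (sideSet_pathIndicesThrough φ y)
    hdisj hne

/-- Let `Y` be the graph on `{0, …, m-1}` (`m ≥ 2`) consisting of the
path `1 - 2 - ⋯ - (m-1)` and the edges `{0, i_t}` for `1 ≤ i_1 < ⋯ < i_ℓ ≤ m-1`, with
value `π₁`. If `Y` is isomorphic to the line graph of some finite simple connected graph
`X`, then `π₁ ∈ {1, 2, m-2, m-1}`. -/
theorem piOne_of_lineGraph (m : ℕ) (hm : 2 ≤ m) (I : Finset ℕ)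
    (hI : ∀ i ∈ I, 1 ≤ i ∧ i ≤ m - 1) (hne : I.Nonempty)
    {W : Type*} [Fintype W] (X : SimpleGraph W) (hX : X.Connected)
    (hiso : Nonempty (Ygraph m I ≃g SimpleGraph.lineGraph X)) :
    piOne m I ∈ ({1, 2, (m : ℤ) - 2, (m : ℤ) - 1} : Set ℤ) :=
  piOne_of_lineGraph_general m I hI hne X hiso
end
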